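/- arXiv:1611.07900 — 4 statements merged into one kernel-verified Lean document; each statement's English description precedes it below -/
import Mathlib

section
/- There exists x ∈ sl(n+1,ℂ) whose stabilizer under the conjugation action of K̃^ℂ is as small as possible; explicitly, let x be the elementary (n+1)×(n+1) Jordan block (entries x_{i,i+1} = 1 and all others 0). If B ∈ GL(n,ℂ) and the matrix g = blockdiag(B,(det B)⁻¹) satisfies g·x = x·g, then g is a scalar matrix: there exists α ∈ ℂ with α^{n+1} = 1 and g = α·I_{n+1}. Hence the stabilizer of x in K^ℂ = K̃^ℂ/Z is trivial, where Z = {α·I_{n+1} : α^{n+1} = 1}. -/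
/-!
Commuting with the nilpotent Jordan block `J` means `g (i+1) (j+1) = g i j` and `g (i+1) 0 = 0`,
so `g` is an upper triangular Toeplitz matrix, determined by its last column. For
`g = blockdiag (B, (det B)⁻¹)` that column vanishes above the corner, so `g = α • 1` with
`α = (det B)⁻¹`. Then `B = α • 1`, hence `det B = αⁿ` and `α ^ (n + 1) = α * det B = 1`.
-/

open Matrix

noncomputable section

/-- The block diagonal matrix `blockdiag (B, (det B)⁻¹)` in `M_{n+1}(ℂ)`. -/
def gmat (n : ℕ) (B : Matrix (Fin n) (Fin n) ℂ) : Matrix (Fin (n + 1)) (Fin (n + 1)) ℂ :=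
  Matrix.of fun i j =>
    if hi : (i : ℕ) < n then
      (if hj : (j : ℕ) < n then B ⟨i, hi⟩ ⟨j, hj⟩ else 0)
    else if (j : ℕ) < n then 0 else (B.det)⁻¹

/-- The elementary `N × N` Jordan block. -/
def jordan (N : ℕ) : Matrix (Fin N) (Fin N) ℂ :=
  Matrix.of fun i j => if (i : ℕ) + 1 = (j : ℕ) then 1 else 0

section CommuteJordan

variable {N : ℕ}

theorem mul_jordan_apply_succ (g : Matrix (Fin N) (Fin N) ℂ) (i : Fin N) {b : ℕ}
    (hb : b + 1 < N) : (g * jordan N) i ⟨b + 1, hb⟩ = g i ⟨b, by omega⟩ := by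
  rw [mul_apply, Finset.sum_eq_single ⟨b, by omega⟩]
  · simp [jordan]
  · intro k _ hk
    have : (k : ℕ) ≠ b := fun h => hk (Fin.ext h)
    simp [jordan, this]
  · simp

theorem mul_jordan_apply_zero (g : Matrix (Fin N) (Fin N) ℂ) (i : Fin N) (h0 : 0 < N) :
    (g * jordan N) i ⟨0, h0⟩ = 0 := by
  rw [mul_apply]
  exact Finset.sum_eq_zero fun k _ => by simp [jordan]

theorem jordan_mul_apply (g : Matrix (Fin N) (Fin N) ℂ) (j : Fin N) {a : ℕ} (ha : a + 1 < N) :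
    (jordan N * g) ⟨a, by omega⟩ j = g ⟨a + 1, ha⟩ j := by
  rw [mul_apply, Finset.sum_eq_single ⟨a + 1, ha⟩]
  · simp [jordan]
  · intro k _ hk
    have : a + 1 ≠ k := fun h => hk (Fin.ext h.symm)
    simp [jordan, this]
  · simp

variable {g : Matrix (Fin N) (Fin N) ℂ}

theorem apply_succ_succ_of_commute_jordan (h : Commute g (jordan N)) {a b : ℕ}
    (ha : a + 1 < N) (hb : b + 1 < N) :
    g ⟨a + 1, ha⟩ ⟨b + 1, hb⟩ = g ⟨a, by omega⟩ ⟨b, by omega⟩ := by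
  rw [← jordan_mul_apply g _ ha, ← h.eq, mul_jordan_apply_succ]

theorem apply_succ_zero_of_commute_jordan (h : Commute g (jordan N)) {a : ℕ}
    (ha : a + 1 < N) : g ⟨a + 1, ha⟩ ⟨0, by omega⟩ = 0 := by
  rw [← jordan_mul_apply g _ ha, ← h.eq, mul_jordan_apply_zero]

theorem apply_add_add_of_commute_jordan (h : Commute g (jordan N)) (i j : Fin N) {k : ℕ}
    (hi : i + k < N) (hj : j + k < N) : g ⟨i + k, hi⟩ ⟨j + k, hj⟩ = g i j := by
  induction k with
  | zero => rfl
  | succ k ih =>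
    simp only [← add_assoc] at hi hj ⊢
    rw [apply_succ_succ_of_commute_jordan h hi hj, ih]

theorem apply_eq_apply_of_commute_jordan (h : Commute g (jordan N)) {i j i' j' : Fin N}
    (hij : (i : ℕ) + j' = i' + j) : g i j = g i' j' := by
  wlog hle : (i : ℕ) ≤ i' generalizing i j i' j'
  · exact (this hij.symm (by omega)).symm
  obtain ⟨k, hk⟩ := Nat.exists_eq_add_of_le hle
  have hj' : (j' : ℕ) = j + k := by omega
  rw [← apply_add_add_of_commute_jordan h i j (hk ▸ i'.isLt) (hj' ▸ j'.isLt)]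
  congr 1 <;> ext <;> simp [hk, hj']

theorem apply_eq_zero_of_commute_jordan (h : Commute g (jordan N)) {i j : Fin N}
    (hji : j < i) : g i j = 0 := by
  obtain ⟨a, ha⟩ := Nat.exists_eq_add_of_lt hji
  rw [apply_eq_apply_of_commute_jordan h (i' := ⟨a + 1, by omega⟩) (j' := ⟨0, by omega⟩)
    (by simp; omega)]
  exact apply_succ_zero_of_commute_jordan h _

end CommuteJordan

theorem eq_smul_one_of_commute_jordan {m : ℕ} {g : Matrix (Fin (m + 1)) (Fin (m + 1)) ℂ}
    (h : Commute g (jordan (m + 1)))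
    (hlast : ∀ i : Fin (m + 1), i ≠ Fin.last m → g i (Fin.last m) = 0) :
    g = g (Fin.last m) (Fin.last m) • 1 := by
  ext i j
  rcases lt_or_ge j i with hji | hij
  · simp [apply_eq_zero_of_commute_jordan h hji, one_apply_ne' hji.ne]
  · have hlt : (i : ℕ) + (m - j) < m + 1 := by omega
    rw [apply_eq_apply_of_commute_jordan h (i' := ⟨i + (m - j), hlt⟩) (j' := Fin.last m)
      (by simp; omega)]
    rcases hij.lt_or_eq with hlt' | rfl
    · rw [hlast _ (by simp [Fin.ext_iff]; omega)]
      simp [one_apply_ne' hlt'.ne']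
    · rw [show (⟨i + (m - i), hlt⟩ : Fin (m + 1)) = Fin.last m from Fin.ext (by simp; omega)]
      simp

section gmat

variable {n : ℕ} (B : Matrix (Fin n) (Fin n) ℂ)

@[simp]
theorem gmat_apply_castSucc_castSucc (i j : Fin n) : gmat n B i.castSucc j.castSucc = B i j := by
  simp [gmat]

@[simp]
theorem gmat_apply_castSucc_last (i : Fin n) : gmat n B i.castSucc (Fin.last n) = 0 := by
  simp [gmat]

@[simp]
theorem gmat_apply_last_last : gmat n B (Fin.last n) (Fin.last n) = B.det⁻¹ := by
  simp [gmat]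

theorem gmat_apply_last_of_ne {i : Fin (n + 1)} (hi : i ≠ Fin.last n) :
    gmat n B i (Fin.last n) = 0 := by
  obtain ⟨i, rfl⟩ := Fin.exists_castSucc_eq.mpr hi
  exact gmat_apply_castSucc_last B i

end gmat

theorem statement12_general (n : ℕ) (B : GL (Fin n) ℂ)
    (hcomm : gmat n ↑B * jordan (n + 1) = jordan (n + 1) * gmat n ↑B) :
    ∃ α : ℂ, α ^ (n + 1) = 1 ∧
      gmat n ↑B = α • (1 : Matrix (Fin (n + 1)) (Fin (n + 1)) ℂ) := by
  set α := (B : Matrix (Fin n) (Fin n) ℂ).det⁻¹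
  have hg : gmat n ↑B = α • 1 := by
    simpa using eq_smul_one_of_commute_jordan hcomm (fun i hi => gmat_apply_last_of_ne _ hi)
  have hB : (B : Matrix (Fin n) (Fin n) ℂ) = α • 1 := by
    ext i j
    simpa [one_apply] using congrFun₂ hg i.castSucc j.castSucc
  have hdet : (B : Matrix (Fin n) (Fin n) ℂ).det ≠ 0 := B.isUnit.map detMonoidHom |>.ne_zero
  refine ⟨α, ?_, hg⟩
  calc α ^ (n + 1) = α * (B : Matrix (Fin n) (Fin n) ℂ).det := by
        rw [pow_succ', congrArg det hB, det_smul, det_one, mul_one, Fintype.card_fin]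
    _ = 1 := inv_mul_cancel₀ hdet

/-- If `g = blockdiag (B, (det B)⁻¹)` commutes with the elementary
`(n+1) × (n+1)` Jordan block, then `g = α • I` for some `(n+1)`-st root of unity `α`;
hence the stabilizer of the Jordan block in `K^ℂ = K̃^ℂ/Z` is trivial. -/
theorem statement12 (n : ℕ) (hn : 1 ≤ n) (B : GL (Fin n) ℂ)
    (hcomm : gmat n ↑B * jordan (n + 1) = jordan (n + 1) * gmat n ↑B) :
    ∃ α : ℂ, α ^ (n + 1) = 1 ∧
      gmat n ↑B = α • (1 : Matrix (Fin (n + 1)) (Fin (n + 1)) ℂ) :=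
  statement12_general n B hcomm
end
end

section
/- Let x ∈ M_{2n+2}(ℂ) be the block matrix (with block sizes n, n, 1, 1) x = [[J, 0, eₙ, 0],[0, −Jᵗ, 0, e₁],[0, −eₙᵗ, 0, 0],[−e₁ᵗ, 0, 0, 0]]. If A ∈ M_{2n+1}(ℂ) satisfies det A = 1 and AᵗΓ₀A = Γ₀, and the block-diagonal matrix blockdiag(A,1) ∈ M_{2n+2}(ℂ) commutes with x, then A = I_{2n+1}. Hence the element x of so(2n+2,ℂ) (realized relative to Γ) has trivial stabilizer in K^ℂ. -/
open Matrix

noncomputable section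

/-- The matrix `Γ₀ = [[0, Iₙ, 0], [Iₙ, 0, 0], [0, 0, 1]] ∈ M_{2n+1}(ℂ)`. -/
def gamma0odd (n : ℕ) : Matrix (Fin (2 * n + 1)) (Fin (2 * n + 1)) ℂ :=
  Matrix.of fun i j =>
    if ((i : ℕ) + n = (j : ℕ) ∧ (j : ℕ) < 2 * n) ∨
        ((j : ℕ) + n = (i : ℕ) ∧ (i : ℕ) < 2 * n) ∨
        ((i : ℕ) = 2 * n ∧ (j : ℕ) = 2 * n) then 1 else 0

/-- The block matrix (block sizes `n, n, 1, 1`)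
`x = [[J, 0, eₙ, 0], [0, -Jᵗ, 0, e₁], [0, -eₙᵗ, 0, 0], [-e₁ᵗ, 0, 0, 0]] ∈ M_{2n+2}(ℂ)`,
where `J` is the elementary `n × n` Jordan block. -/
def xOdd (n : ℕ) : Matrix (Fin (2 * n + 2)) (Fin (2 * n + 2)) ℂ :=
  Matrix.of fun i j =>
    if (j : ℕ) = (i : ℕ) + 1 ∧ (j : ℕ) < n then 1
    else if (i : ℕ) = (j : ℕ) + 1 ∧ n ≤ (j : ℕ) ∧ (i : ℕ) < 2 * n then -1
    else if (i : ℕ) = n - 1 ∧ (j : ℕ) = 2 * n then 1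
    else if (i : ℕ) = n ∧ (j : ℕ) = 2 * n + 1 then 1
    else if (i : ℕ) = 2 * n ∧ (j : ℕ) = 2 * n - 1 then -1
    else if (i : ℕ) = 2 * n + 1 ∧ (j : ℕ) = 0 then -1
    else 0

/-- The block diagonal matrix `blockdiag (A, 1) ∈ M_{2n+2}(ℂ)` for `A ∈ M_{2n+1}(ℂ)`. -/
def embedOdd (n : ℕ) (A : Matrix (Fin (2 * n + 1)) (Fin (2 * n + 1)) ℂ) :
    Matrix (Fin (2 * n + 2)) (Fin (2 * n + 2)) ℂ :=
  Matrix.of fun i j =>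
    if hi : (i : ℕ) < 2 * n + 1 then
      (if hj : (j : ℕ) < 2 * n + 1 then A ⟨i, hi⟩ ⟨j, hj⟩ else 0)
    else if (j : ℕ) < 2 * n + 1 then 0 else 1

/-!
The basis vector `e_{2n+1}` is a cyclic vector for `x`: column by column, `x` sends
`e_{2n+1} ↦ e_n ↦ -e_{n+1} ↦ ⋯ ↦ ±e_{2n} ↦ e_{n-1} ↦ e_{n-2} ↦ ⋯ ↦ e_0`, each basis vector to a
nonzero multiple of the next one in this chain, which runs through all of them. A matrix that
commutes with `x` and fixes the first vector of the chain therefore fixes every vector of it,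
so it is the identity. Since `blockdiag (A, 1)` fixes `e_{2n+1}`, this forces `A = 1`.
-/

theorem mulVec_eq_self_of_commute {ι K : Type*} [Fintype ι] [Field K] {B X : Matrix ι ι K}
    (hBX : Commute B X) {v w : ι → K} {c : K} (hc : c ≠ 0) (hXv : X *ᵥ v = c • w)
    (hBv : B *ᵥ v = v) : B *ᵥ w = w := by
  have h : c • (B *ᵥ w) = c • w := by
    rw [← mulVec_smul, ← hXv, mulVec_mulVec, hBX.eq, ← mulVec_mulVec, hBv]
  exact smul_right_injective _ hc h

section
variable (n : ℕ)

theorem xOdd_mulVec_single_last :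
    xOdd n *ᵥ Pi.single ⟨2 * n + 1, by omega⟩ 1 = Pi.single ⟨n, by omega⟩ 1 := by
  ext i
  simp only [mulVec_single_one, col_apply, xOdd, of_apply, Pi.single_apply, Fin.ext_iff,
    and_true]
  split_ifs <;> first | rfl | omega | simp_all

theorem xOdd_mulVec_single_of_le_of_lt {j : ℕ} (h₁ : n ≤ j) (h₂ : j < 2 * n) :
    xOdd n *ᵥ Pi.single ⟨j, by omega⟩ 1 = (-1 : ℂ) • Pi.single ⟨j + 1, by omega⟩ 1 := by
  ext i
  simp only [mulVec_single_one, col_apply, xOdd, of_apply, Pi.single_apply, Fin.ext_iff,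
    Pi.smul_apply, smul_eq_mul, mul_ite, mul_one, mul_zero]
  split_ifs <;> first | rfl | omega

theorem xOdd_mulVec_single_two_mul (hn : 0 < n) :
    xOdd n *ᵥ Pi.single ⟨2 * n, by omega⟩ 1 = Pi.single ⟨n - 1, by omega⟩ 1 := by
  ext i
  simp only [mulVec_single_one, col_apply, xOdd, of_apply, Pi.single_apply, Fin.ext_iff,
    and_true]
  split_ifs <;> first | rfl | omega

theorem xOdd_mulVec_single_succ {j : ℕ} (h : j + 1 < n) :
    xOdd n *ᵥ Pi.single ⟨j + 1, by omega⟩ 1 = Pi.single ⟨j, by omega⟩ 1 := by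
  ext i
  simp only [mulVec_single_one, col_apply, xOdd, of_apply, Pi.single_apply, Fin.ext_iff]
  split_ifs <;> first | rfl | omega | simp_all

theorem embedOdd_mulVec_single_last (A : Matrix (Fin (2 * n + 1)) (Fin (2 * n + 1)) ℂ) :
    embedOdd n A *ᵥ Pi.single ⟨2 * n + 1, by omega⟩ 1 = Pi.single ⟨2 * n + 1, by omega⟩ 1 := by
  ext i
  simp only [mulVec_single_one, col_apply, embedOdd, of_apply, Pi.single_apply, Fin.ext_iff]
  split_ifs <;> first | rfl | omega

theorem embedOdd_apply_castSucc (A : Matrix (Fin (2 * n + 1)) (Fin (2 * n + 1)) ℂ)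
    (i j : Fin (2 * n + 1)) : embedOdd n A i.castSucc j.castSucc = A i j := by
  simp [embedOdd, Fin.is_le]

end

theorem eq_one_of_commute_xOdd {n : ℕ} {B : Matrix (Fin (2 * n + 2)) (Fin (2 * n + 2)) ℂ}
    (hBX : Commute B (xOdd n))
    (hB : B *ᵥ Pi.single ⟨2 * n + 1, by omega⟩ 1 = Pi.single ⟨2 * n + 1, by omega⟩ 1) :
    B = 1 := by
  set Fixed : ℕ → Prop := fun m =>
    ∀ hm : m < 2 * n + 2, B *ᵥ Pi.single ⟨m, hm⟩ 1 = Pi.single ⟨m, hm⟩ 1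
  have hupper : ∀ m, n ≤ m → m ≤ 2 * n → Fixed m := by
    intro m hnm
    induction m, hnm using Nat.le_induction with
    | base =>
      intro _ _
      refine mulVec_eq_self_of_commute hBX one_ne_zero ?_ hB
      rw [one_smul, xOdd_mulVec_single_last]
    | succ m hnm ih =>
      intro hm _
      exact mulVec_eq_self_of_commute hBX (neg_ne_zero.2 one_ne_zero)
        (xOdd_mulVec_single_of_le_of_lt n hnm (by omega)) (ih (by omega) (by omega))
  have hlower : ∀ m, m < n → Fixed m := by
    intro m hm
    induction Nat.le_sub_one_of_lt hm using Nat.decreasingInduction with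
    | self =>
      intro _
      refine mulVec_eq_self_of_commute hBX one_ne_zero ?_
        (hupper (2 * n) (by omega) le_rfl (by omega))
      rw [one_smul, xOdd_mulVec_single_two_mul n (by omega)]
    | of_succ k _ ih =>
      intro _
      refine mulVec_eq_self_of_commute hBX one_ne_zero ?_ (ih (by omega) (by omega))
      rw [one_smul, xOdd_mulVec_single_succ n (by omega)]
  refine ext_of_mulVec_single fun ⟨j, hj⟩ => ?_
  rw [one_mulVec]
  obtain rfl | hj_ne := eq_or_ne j (2 * n + 1)
  · exact hB
  obtain hnj | hjn := le_or_gt n j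
  · exact hupper j hnj (by omega) hj
  · exact hlower j hjn hj

theorem statement13_general (n : ℕ)
    (A : Matrix (Fin (2 * n + 1)) (Fin (2 * n + 1)) ℂ)
    (hcomm : embedOdd n A * xOdd n = xOdd n * embedOdd n A) :
    A = 1 := by
  have hB : embedOdd n A = 1 :=
    eq_one_of_commute_xOdd hcomm (embedOdd_mulVec_single_last n A)
  ext i j
  rw [← embedOdd_apply_castSucc n A, hB]
  simp [one_apply]

/-- If `A ∈ SL(2n+1, ℂ)` satisfies `Aᵗ Γ₀ A = Γ₀` and `blockdiag (A, 1)`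
commutes with the element `x` of `so(2n+2, ℂ)` above, then `A = 1`; hence `x` has trivial
stabilizer in `K^ℂ`. -/
theorem statement13 (n : ℕ) (hn : 1 ≤ n)
    (A : Matrix (Fin (2 * n + 1)) (Fin (2 * n + 1)) ℂ)
    (hdet : A.det = 1) (hA : Aᵀ * gamma0odd n * A = gamma0odd n)
    (hcomm : embedOdd n A * xOdd n = xOdd n * embedOdd n A) :
    A = 1 :=
  statement13_general n A hcomm
end
end

section
/- Let x ∈ M_{2n+1}(ℂ) be the block matrix (with block sizes n, n, 1) x = [[J, Δ, 0],[0, −Jᵗ, e₁],[−e₁ᵗ, 0, 0]]. If A ∈ M_{2n}(ℂ) satisfies det A = 1 and AᵗΓ₀A = Γ₀, and the block-diagonal matrix blockdiag(A,1) ∈ M_{2n+1}(ℂ) commutes with x, then A = I_{2n}. Hence the element x of so(2n+1,ℂ) (realized relative to Γ) has trivial stabilizer in K^ℂ. -/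
open Matrix

noncomputable section

/-- The matrix `Γ₀ = [[0, Iₙ], [Iₙ, 0]] ∈ M_{2n}(ℂ)`. -/
def gamma0even (n : ℕ) : Matrix (Fin (2 * n)) (Fin (2 * n)) ℂ :=
  Matrix.of fun i j =>
    if (i : ℕ) + n = (j : ℕ) ∨ (j : ℕ) + n = (i : ℕ) then 1 else 0

/-- The block matrix (block sizes `n, n, 1`)
`x = [[J, Δ, 0], [0, -Jᵗ, e₁], [-e₁ᵗ, 0, 0]] ∈ M_{2n+1}(ℂ)`, where `J` is the elementary
`n × n` Jordan block and `Δ` has only the nonzero entries `Δ_{n-1,n} = 1`, `Δ_{n,n-1} = -1`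
(1-indexed). -/
def xEven (n : ℕ) : Matrix (Fin (2 * n + 1)) (Fin (2 * n + 1)) ℂ :=
  Matrix.of fun i j =>
    if (j : ℕ) = (i : ℕ) + 1 ∧ (j : ℕ) < n then 1
    else if (i : ℕ) = n - 2 ∧ (j : ℕ) = 2 * n - 1 then 1
    else if (i : ℕ) = n - 1 ∧ (j : ℕ) = 2 * n - 2 then -1
    else if (i : ℕ) = (j : ℕ) + 1 ∧ n ≤ (j : ℕ) ∧ (i : ℕ) < 2 * n then -1
    else if (i : ℕ) = n ∧ (j : ℕ) = 2 * n then 1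
    else if (i : ℕ) = 2 * n ∧ (j : ℕ) = 0 then -1
    else 0

/-- The block diagonal matrix `blockdiag (A, 1) ∈ M_{2n+1}(ℂ)` for `A ∈ M_{2n}(ℂ)`. -/
def embedEven (n : ℕ) (A : Matrix (Fin (2 * n)) (Fin (2 * n)) ℂ) :
    Matrix (Fin (2 * n + 1)) (Fin (2 * n + 1)) ℂ :=
  Matrix.of fun i j =>
    if hi : (i : ℕ) < 2 * n then
      (if hj : (j : ℕ) < 2 * n then A ⟨i, hi⟩ ⟨j, hj⟩ else 0)
    else if (j : ℕ) < 2 * n then 0 else 1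


/-! Indices are `0`-based. Commuting with `blockdiag (A, 1)` says that `A` commutes with the
upper-left block `X` of `x`, that `A eₙ = eₙ` (last column of `x`) and that `e₀ᵗ A = e₀ᵗ` (last
row of `x`). Vectors fixed by `A` stay fixed under `X`, and `X` maps `eⱼ ↦ -eⱼ₊₁` for
`n ≤ j ≤ 2n - 3`, `e₂ₙ₋₂ ↦ -(eₙ₋₁ + e₂ₙ₋₁) ↦ 2eₙ₋₂` and `eⱼ₊₁ ↦ eⱼ` for `j ≤ n - 2`. So `A` fixes
`eₙ₋₁ + e₂ₙ₋₁` and every `eⱼ` with `j ∉ {n - 1, 2n - 1}`, i.e. `A = 1 + u dᵗ` with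
`d = eₙ₋₁ - e₂ₙ₋₁` and `u = (A - 1) eₙ₋₁`. Now `det A = 1 + d ⬝ u` forces `d ⬝ u = 0`,
`X u = (A - 1) X eₙ₋₁ = (A - 1) eₙ₋₂ = 0`, and `u₀ = 0` by the row condition. Since `ker X` is
spanned by `e₀` and `d`, this gives `u = 0`. -/

/-- The standard basis vector indexed by a natural number, so that indices such as `2 * n - 1`
need no bound proofs; it is `0` when `N ≤ i`. -/
def unitVec (R : Type*) [Zero R] [One R] (N i : ℕ) : Fin N → R :=
  fun k => if (k : ℕ) = i then 1 else 0

section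
variable {R : Type*} [Semiring R]

lemma unitVec_val_eq_single {N : ℕ} (k : Fin N) : unitVec R N k = Pi.single k 1 := by
  ext l
  simp [unitVec, Pi.single_apply, Fin.ext_iff]

lemma unitVec_eq_single {N i : ℕ} (hi : i < N) : unitVec R N i = Pi.single ⟨i, hi⟩ 1 :=
  unitVec_val_eq_single (⟨i, hi⟩ : Fin N)

lemma mulVec_unitVec {ι : Type*} {N j : ℕ} (M : Matrix ι (Fin N) R) (hj : j < N) :
    M *ᵥ unitVec R N j = fun i => M i ⟨j, hj⟩ := by
  rw [unitVec_eq_single hj, mulVec_single_one]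
  rfl

lemma unitVec_vecMul {ι : Type*} [Fintype ι] {N i : ℕ} (M : Matrix (Fin N) ι R) (hi : i < N) :
    unitVec R N i ᵥ* M = M ⟨i, hi⟩ := by
  rw [unitVec_eq_single hi, single_one_vecMul]
  rfl

lemma unitVec_dotProduct {N i : ℕ} (v : Fin N → R) (hi : i < N) :
    unitVec R N i ⬝ᵥ v = v ⟨i, hi⟩ := by
  rw [unitVec_eq_single hi, single_one_dotProduct]

lemma mulVec_mulVec_eq_of_commute {ι : Type*} [Fintype ι] {A X : Matrix ι ι R}
    (h : Commute A X) {v : ι → R} (hv : A *ᵥ v = v) : A *ᵥ (X *ᵥ v) = X *ᵥ v := by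
  rw [mulVec_mulVec, h.eq, ← mulVec_mulVec, hv]

end

lemma det_one_add_vecMulVec {ι S : Type*} [Fintype ι] [DecidableEq ι] [CommRing S]
    (u v : ι → S) : (1 + vecMulVec u v).det = 1 + v ⬝ᵥ u := by
  rw [vecMulVec_eq Unit, det_one_add_replicateCol_mul_replicateRow]

def xBlock (n : ℕ) : Matrix (Fin (2 * n)) (Fin (2 * n)) ℂ :=
  (xEven n).submatrix Fin.castSucc Fin.castSucc

section xBlock
variable {n : ℕ}
local notation "e" => unitVec ℂ (2 * n)

lemma xBlock_apply (i j : Fin (2 * n)) :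
    xBlock n i j =
      if (j : ℕ) = i + 1 ∧ (j : ℕ) < n then 1
      else if (i : ℕ) = n - 2 ∧ (j : ℕ) = 2 * n - 1 then 1
      else if (i : ℕ) = n - 1 ∧ (j : ℕ) = 2 * n - 2 then -1
      else if (i : ℕ) = j + 1 ∧ n ≤ (j : ℕ) then -1
      else 0 := by
  simp only [xBlock, xEven, submatrix_apply, of_apply, Fin.val_castSucc]
  split_ifs <;> first | rfl | omega

lemma xBlock_mulVec_upper {j : ℕ} (h1 : n ≤ j) (h2 : j + 3 ≤ 2 * n) :
    xBlock n *ᵥ e j = -e (j + 1) := by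
  ext k
  simp only [mulVec_unitVec _ (by omega : j < 2 * n), xBlock_apply, unitVec, Pi.neg_apply]
  split_ifs <;> (try simp) <;> omega

lemma xBlock_mulVec_lower {j : ℕ} (h : j + 2 ≤ n) : xBlock n *ᵥ e (j + 1) = e j := by
  ext k
  simp only [mulVec_unitVec _ (by omega : j + 1 < 2 * n), xBlock_apply, unitVec]
  split_ifs <;> (try simp) <;> omega

lemma xBlock_mulVec_sub_one (hn : 2 ≤ n) : xBlock n *ᵥ e (n - 1) = e (n - 2) := by
  have h := xBlock_mulVec_lower (n := n) (j := n - 2) (by omega)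
  rwa [show n - 2 + 1 = n - 1 by omega] at h

lemma xBlock_mulVec_two_mul_sub_two (hn : 2 ≤ n) :
    xBlock n *ᵥ e (2 * n - 2) = -(e (n - 1) + e (2 * n - 1)) := by
  ext k
  simp only [mulVec_unitVec _ (by omega : 2 * n - 2 < 2 * n), xBlock_apply, unitVec,
    Pi.neg_apply, Pi.add_apply, and_true]
  split_ifs <;> (try simp) <;> omega

lemma xBlock_mulVec_two_mul_sub_one (hn : 2 ≤ n) :
    xBlock n *ᵥ e (2 * n - 1) = e (n - 2) := by
  ext k
  simp only [mulVec_unitVec _ (by omega : 2 * n - 1 < 2 * n), xBlock_apply, unitVec, and_true]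
  split_ifs <;> (try simp) <;> omega

lemma vecMul_xBlock_lower {i : ℕ} (h : i + 2 < n) : e i ᵥ* xBlock n = e (i + 1) := by
  ext k
  simp only [unitVec_vecMul _ (by omega : i < 2 * n), xBlock_apply, unitVec]
  split_ifs <;> (try simp) <;> omega

lemma vecMul_xBlock_sub_two (hn : 2 ≤ n) :
    e (n - 2) ᵥ* xBlock n = e (n - 1) + e (2 * n - 1) := by
  ext k
  simp only [unitVec_vecMul _ (by omega : n - 2 < 2 * n), xBlock_apply, unitVec, Pi.add_apply,
    true_and]
  split_ifs <;> (try simp) <;> omega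

lemma vecMul_xBlock_upper {i : ℕ} (h1 : n ≤ i) (h2 : i + 2 ≤ 2 * n) :
    e (i + 1) ᵥ* xBlock n = -e i := by
  ext k
  simp only [unitVec_vecMul _ (by omega : i + 1 < 2 * n), xBlock_apply, unitVec, Pi.neg_apply]
  split_ifs <;> (try simp) <;> omega

lemma eq_zero_of_xBlock_mulVec_eq_zero (hn : 2 ≤ n) {u : Fin (2 * n) → ℂ}
    (hu : xBlock n *ᵥ u = 0) (h0 : e 0 ⬝ᵥ u = 0) (hd : (e (n - 1) - e (2 * n - 1)) ⬝ᵥ u = 0) :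
    u = 0 := by
  have hrow (i : ℕ) : (e i ᵥ* xBlock n) ⬝ᵥ u = 0 := by
    rw [← dotProduct_mulVec, hu, dotProduct_zero]
  have hsum := hrow (n - 2)
  rw [vecMul_xBlock_sub_two hn, add_dotProduct] at hsum
  rw [sub_dotProduct] at hd
  ext ⟨k, hk⟩
  rw [← unitVec_dotProduct u hk, Pi.zero_apply]
  rcases (by omega : k = 0 ∨ (1 ≤ k ∧ k + 2 ≤ n) ∨ k = n - 1 ∨ (n ≤ k ∧ k + 2 ≤ 2 * n) ∨
      k = 2 * n - 1) with rfl | ⟨h1, h2⟩ | rfl | ⟨h1, h2⟩ | rfl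
  · exact h0
  · obtain ⟨i, rfl⟩ := Nat.exists_eq_add_of_le' h1
    simpa [vecMul_xBlock_lower (by omega : i + 2 < n)] using hrow i
  · linear_combination (hsum + hd) / 2
  · simpa [vecMul_xBlock_upper h1 h2] using hrow (k + 1)
  · linear_combination (hsum - hd) / 2

end xBlock

section embedEven
variable {n : ℕ} (A : Matrix (Fin (2 * n)) (Fin (2 * n)) ℂ)

@[simp] lemma embedEven_castSucc_castSucc (i j : Fin (2 * n)) :
    embedEven n A i.castSucc j.castSucc = A i j := by
  simp [embedEven]

@[simp] lemma embedEven_castSucc_last (i : Fin (2 * n)) :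
    embedEven n A i.castSucc (Fin.last _) = 0 := by
  simp [embedEven]

@[simp] lemma embedEven_last_castSucc (j : Fin (2 * n)) :
    embedEven n A (Fin.last _) j.castSucc = 0 := by
  simp [embedEven]

@[simp] lemma embedEven_last_last : embedEven n A (Fin.last _) (Fin.last _) = 1 := by
  simp [embedEven]

lemma xEven_castSucc_last (i : Fin (2 * n)) :
    xEven n i.castSucc (Fin.last _) = unitVec ℂ (2 * n) n i := by
  simp only [xEven, of_apply, Fin.val_last, Fin.val_castSucc, unitVec, and_true]
  split_ifs <;> (try simp) <;> omega

lemma xEven_last_castSucc (j : Fin (2 * n)) :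
    xEven n (Fin.last _) j.castSucc = -unitVec ℂ (2 * n) 0 j := by
  simp only [xEven, of_apply, Fin.val_last, Fin.val_castSucc, unitVec, true_and]
  split_ifs <;> (try simp) <;> omega

variable {A} (hcomm : embedEven n A * xEven n = xEven n * embedEven n A)
include hcomm

lemma commute_xBlock_of_embedEven : Commute A (xBlock n) := by
  ext i j
  simpa [mul_apply, Fin.sum_univ_castSucc, xBlock] using congr_fun₂ hcomm i.castSucc j.castSucc

lemma mulVec_unitVec_of_embedEven : A *ᵥ unitVec ℂ (2 * n) n = unitVec ℂ (2 * n) n := by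
  ext i
  simpa [mul_apply, Fin.sum_univ_castSucc, xEven_castSucc_last, mulVec, dotProduct]
    using congr_fun₂ hcomm i.castSucc (Fin.last _)

lemma unitVec_zero_vecMul_of_embedEven : unitVec ℂ (2 * n) 0 ᵥ* A = unitVec ℂ (2 * n) 0 := by
  ext j
  simpa [mul_apply, Fin.sum_univ_castSucc, xEven_last_castSucc, vecMul, dotProduct]
    using (congr_fun₂ hcomm (Fin.last _) j.castSucc).symm

end embedEven

section fixedVectors
variable {n : ℕ} {A : Matrix (Fin (2 * n)) (Fin (2 * n)) ℂ} (hA : Commute A (xBlock n))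
local notation "e" => unitVec ℂ (2 * n)
include hA

lemma mulVec_unitVec_upper (hfix : A *ᵥ e n = e n) {j : ℕ} (h1 : n ≤ j) (h2 : j + 2 ≤ 2 * n) :
    A *ᵥ e j = e j := by
  induction j, h1 using Nat.le_induction with
  | base => exact hfix
  | succ j hj ih =>
    have h := mulVec_mulVec_eq_of_commute hA (ih (by omega))
    rwa [xBlock_mulVec_upper hj (by omega), mulVec_neg, neg_inj] at h

lemma mulVec_unitVec_add_unitVec (hn : 2 ≤ n) (hfix : A *ᵥ e n = e n) :
    A *ᵥ (e (n - 1) + e (2 * n - 1)) = e (n - 1) + e (2 * n - 1) := by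
  have h := mulVec_mulVec_eq_of_commute hA
    (mulVec_unitVec_upper hA hfix (j := 2 * n - 2) (by omega) (by omega))
  rwa [xBlock_mulVec_two_mul_sub_two hn, mulVec_neg, neg_inj] at h

lemma mulVec_unitVec_sub_two (hn : 2 ≤ n) (hfix : A *ᵥ e n = e n) :
    A *ᵥ e (n - 2) = e (n - 2) := by
  have h := mulVec_mulVec_eq_of_commute hA (mulVec_unitVec_add_unitVec hA hn hfix)
  rw [mulVec_add, xBlock_mulVec_sub_one hn, xBlock_mulVec_two_mul_sub_one hn, ← two_smul ℂ,
    mulVec_smul] at h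
  exact smul_right_injective _ two_ne_zero h

lemma mulVec_unitVec_lower (hn : 2 ≤ n) (hfix : A *ᵥ e n = e n) {j : ℕ} (hj : j + 2 ≤ n) :
    A *ᵥ e j = e j := by
  induction (show j ≤ n - 2 by omega) using Nat.decreasingInduction with
  | self => exact mulVec_unitVec_sub_two hA hn hfix
  | of_succ k hk ih =>
    have h := mulVec_mulVec_eq_of_commute hA (ih (by omega))
    rwa [xBlock_mulVec_lower (by omega)] at h

lemma eq_one_add_vecMulVec (hn : 2 ≤ n) (hfix : A *ᵥ e n = e n) :
    A = 1 + vecMulVec (A *ᵥ e (n - 1) - e (n - 1)) (e (n - 1) - e (2 * n - 1)) := by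
  refine ext_of_mulVec_single fun ⟨k, hk⟩ => ?_
  rw [← unitVec_val_eq_single, add_mulVec, one_mulVec, vecMulVec_mulVec, op_smul_eq_smul,
    sub_dotProduct, unitVec_dotProduct _ (by omega : n - 1 < 2 * n),
    unitVec_dotProduct _ (by omega : 2 * n - 1 < 2 * n)]
  simp only [unitVec]
  have hne : 2 * n - 1 ≠ n - 1 := by omega
  rcases (by omega : k = n - 1 ∨ k = 2 * n - 1 ∨ (k ≠ n - 1 ∧ k ≠ 2 * n - 1))
    with rfl | rfl | ⟨h1, h2⟩
  · simp [hne]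
  · have h := mulVec_unitVec_add_unitVec hA hn hfix
    rw [mulVec_add] at h
    simp only [hne.symm, if_false, if_true, zero_sub, neg_one_smul, neg_sub]
    linear_combination (norm := module) h
  · rw [if_neg h1.symm, if_neg h2.symm, sub_zero, zero_smul, add_zero]
    rcases le_or_gt n k with h | h
    · exact mulVec_unitVec_upper hA hfix h (by omega)
    · exact mulVec_unitVec_lower hA hn hfix (by omega)

end fixedVectors

theorem statement14_general (n : ℕ) (hn : 2 ≤ n)
    (A : Matrix (Fin (2 * n)) (Fin (2 * n)) ℂ)
    (hdet : A.det = 1)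
    (hcomm : embedEven n A * xEven n = xEven n * embedEven n A) :
    A = 1 := by
  have hA := commute_xBlock_of_embedEven hcomm
  have hfix := mulVec_unitVec_of_embedEven hcomm
  have hform := eq_one_add_vecMulVec hA hn hfix
  have hu : A *ᵥ unitVec ℂ (2 * n) (n - 1) - unitVec ℂ (2 * n) (n - 1) = 0 := by
    refine eq_zero_of_xBlock_mulVec_eq_zero hn ?_ ?_ ?_
    · rw [mulVec_sub, mulVec_mulVec, ← hA.eq, ← mulVec_mulVec, xBlock_mulVec_sub_one hn,
        mulVec_unitVec_sub_two hA hn hfix, sub_self]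
    · rw [dotProduct_sub, dotProduct_mulVec, unitVec_zero_vecMul_of_embedEven hcomm, sub_self]
    · rwa [hform, det_one_add_vecMulVec, add_eq_left] at hdet
  rw [hform, hu, zero_vecMulVec, add_zero]

/-- If `A ∈ SL(2n, ℂ)` satisfies `Aᵗ Γ₀ A = Γ₀` and `blockdiag (A, 1)`
commutes with the element `x` of `so(2n+1, ℂ)` above, then `A = 1`; hence `x` has trivial
stabilizer in `K^ℂ`. -/
theorem statement14 (n : ℕ) (hn : 2 ≤ n)
    (A : Matrix (Fin (2 * n)) (Fin (2 * n)) ℂ)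
    (hdet : A.det = 1) (hA : Aᵀ * gamma0even n * A = gamma0even n)
    (hcomm : embedEven n A * xEven n = xEven n * embedEven n A) :
    A = 1 :=
  statement14_general n hn A hdet hcomm
end
end

section
/- Let x ∈ M_{2n+1}(ℂ) be the block matrix (with block sizes n, n, 1) x = [[J, Δ, 0],[0, −Jᵗ, e₁],[−e₁ᵗ, 0, 0]]. If X = [[A, B, 0],[C, −Aᵗ, 0],[0, 0, 0]] with A, B, C ∈ M_n(ℂ), Bᵗ = −B, Cᵗ = −C, and X commutes with x, then X = 0. That is, the centralizer of x in the subalgebra k of so(2n+1,ℂ) is zero. -/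
/-!
Since `X` commutes with `x`, the kernel of `X` is `x`-invariant and the kernel of `Xᵀ` is
`xᵀ`-invariant. Both kernels contain `e_{2n}`, as the last column and the last row of `X` vanish.
Applying `x` (resp. `xᵀ`) repeatedly, and dividing by `2` once, each kernel is seen to contain every
`e_j` with `j ∉ {n-1, 2n-1}` together with `e_{n-1} + e_{2n-1}` (indices from `0`). So `X` lives on
the `2 × 2` block at `{n-1, 2n-1}`, where its rows and its columns come in opposite pairs; the entry
`X_{n-1, 2n-1} = B_{n-1, n-1}` vanishes because `B` is skew, and then so does the whole block.
-/

open Matrix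

noncomputable section

/-- The block matrix `[[A, B, 0], [C, -Aᵗ, 0], [0, 0, 0]] ∈ M_{2n+1}(ℂ)` (an element of the
subalgebra `k` of `so(2n+1, ℂ)` when `Bᵗ = -B` and `Cᵗ = -C`). -/
def kmat (n : ℕ) (A B C : Matrix (Fin n) (Fin n) ℂ) :
    Matrix (Fin (2 * n + 1)) (Fin (2 * n + 1)) ℂ :=
  Matrix.of fun i j =>
    if hi : (i : ℕ) < n then
      (if hj : (j : ℕ) < n then A ⟨i, hi⟩ ⟨j, hj⟩
       else if hj2 : (j : ℕ) < 2 * n then B ⟨i, hi⟩ ⟨(j : ℕ) - n, by omega⟩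
       else 0)
    else if hi2 : (i : ℕ) < 2 * n then
      (if hj : (j : ℕ) < n then C ⟨(i : ℕ) - n, by omega⟩ ⟨j, hj⟩
       else if hj2 : (j : ℕ) < 2 * n then
         -(A ⟨(j : ℕ) - n, by omega⟩ ⟨(i : ℕ) - n, by omega⟩)
       else 0)
    else 0

/-- The `i`-th standard basis vector of `Fin N → R`, indexed by `i : ℕ` so that index arithmetic
stays in `ℕ`; it is `0` when `N ≤ i`. -/
def natSingle (R : Type*) [Zero R] [One R] (N i : ℕ) : Fin N → R :=
  fun k => if (k : ℕ) = i then 1 else 0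

section Kernel

variable {R : Type*} [CommRing R] {N : ℕ}

theorem mulVec_natSingle (M : Matrix (Fin N) (Fin N) R) {j : ℕ} (hj : j < N) :
    M *ᵥ natSingle R N j = fun i => M i ⟨j, hj⟩ := by
  funext i
  rw [mulVec, dotProduct, Finset.sum_eq_single ⟨j, hj⟩]
  · simp [natSingle]
  · intro k _ hk
    simp [natSingle, Fin.val_ne_iff.2 hk]
  · simp

theorem natSingle_mem_ker_iff (M : Matrix (Fin N) (Fin N) R) {j : ℕ} (hj : j < N) :
    natSingle R N j ∈ LinearMap.ker M.mulVecLin ↔ ∀ i, M i ⟨j, hj⟩ = 0 := by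
  rw [LinearMap.mem_ker, mulVecLin_apply, mulVec_natSingle M hj, funext_iff]
  rfl

theorem natSingle_mem_ker_of_le (M : Matrix (Fin N) (Fin N) R) {j : ℕ} (hj : N ≤ j) :
    natSingle R N j ∈ LinearMap.ker M.mulVecLin := by
  convert (LinearMap.ker M.mulVecLin).zero_mem
  funext k
  simp [natSingle, show (k : ℕ) ≠ j by omega]

theorem mulVec_mem_ker_of_mul_comm {M x : Matrix (Fin N) (Fin N) R} (h : M * x = x * M)
    {w : Fin N → R} (hw : w ∈ LinearMap.ker M.mulVecLin) :
    x *ᵥ w ∈ LinearMap.ker M.mulVecLin := by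
  rw [LinearMap.mem_ker, mulVecLin_apply] at hw ⊢
  rw [mulVec_mulVec, h, ← mulVec_mulVec, hw, mulVec_zero]

theorem eq_zero_of_natSingle_mem_ker {M : Matrix (Fin N) (Fin N) R} {p q : ℕ} (hp : p < N)
    (hq : q < N)
    (hcol : ∀ j, j ≠ p → j ≠ q → natSingle R N j ∈ LinearMap.ker M.mulVecLin)
    (hcolpair : natSingle R N p + natSingle R N q ∈ LinearMap.ker M.mulVecLin)
    (hrow : ∀ i, i ≠ p → i ≠ q → natSingle R N i ∈ LinearMap.ker Mᵀ.mulVecLin)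
    (hrowpair : natSingle R N p + natSingle R N q ∈ LinearMap.ker Mᵀ.mulVecLin)
    (hMpq : M ⟨p, hp⟩ ⟨q, hq⟩ = 0) : M = 0 := by
  have colpair (i : Fin N) : M i ⟨p, hp⟩ + M i ⟨q, hq⟩ = 0 := by
    have := congrFun (LinearMap.mem_ker.1 hcolpair) i
    rwa [mulVecLin_apply, mulVec_add, mulVec_natSingle M hp, mulVec_natSingle M hq] at this
  have rowpair (j : Fin N) : M ⟨p, hp⟩ j + M ⟨q, hq⟩ j = 0 := by
    have := congrFun (LinearMap.mem_ker.1 hrowpair) j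
    rwa [mulVecLin_apply, mulVec_add, mulVec_natSingle Mᵀ hp, mulVec_natSingle Mᵀ hq] at this
  have hMpp : M ⟨p, hp⟩ ⟨p, hp⟩ = 0 := by linear_combination colpair ⟨p, hp⟩ - hMpq
  have hMqp : M ⟨q, hq⟩ ⟨p, hp⟩ = 0 := by linear_combination rowpair ⟨p, hp⟩ - hMpp
  have hMqq : M ⟨q, hq⟩ ⟨q, hq⟩ = 0 := by linear_combination colpair ⟨q, hq⟩ - hMqp
  ext i j
  by_cases hj : (j : ℕ) ≠ p ∧ (j : ℕ) ≠ q
  · exact (natSingle_mem_ker_iff M j.isLt).1 (hcol j hj.1 hj.2) i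
  by_cases hi : (i : ℕ) ≠ p ∧ (i : ℕ) ≠ q
  · exact (natSingle_mem_ker_iff Mᵀ i.isLt).1 (hrow i hi.1 hi.2) j
  simp only [not_and_or, not_not] at hi hj
  rcases hi with hi | hi <;> rcases hj with hj | hj <;>
    rw [Fin.ext (show (i : ℕ) = (⟨_, _⟩ : Fin N) from hi),
      Fin.ext (show (j : ℕ) = (⟨_, _⟩ : Fin N) from hj)] <;> assumption

end Kernel

section XEven

variable {n : ℕ}

local notation "e" => natSingle ℂ (2 * n + 1)

theorem xEven_mulVec_natSingle_last (hn : 2 ≤ n) : xEven n *ᵥ e (2 * n) = e n := by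
  rw [mulVec_natSingle _ (by omega : 2 * n < 2 * n + 1)]
  funext k
  simp only [xEven, of_apply, natSingle, and_true]
  split_ifs <;> first | rfl | (exfalso; omega)

theorem xEven_mulVec_natSingle_of_le {j : ℕ} (hj : n ≤ j) (hj' : j + 3 ≤ 2 * n) :
    xEven n *ᵥ e j = -e (j + 1) := by
  rw [mulVec_natSingle _ (by omega : j < 2 * n + 1)]
  funext k
  simp only [xEven, of_apply, natSingle, Pi.neg_apply]
  split_ifs <;> first | (exfalso; omega) | norm_num

theorem xEven_mulVec_natSingle_two_mul_sub_two (hn : 2 ≤ n) :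
    xEven n *ᵥ e (2 * n - 2) = -(e (n - 1) + e (2 * n - 1)) := by
  rw [mulVec_natSingle _ (by omega : 2 * n - 2 < 2 * n + 1)]
  funext k
  simp only [xEven, of_apply, natSingle, Pi.neg_apply, Pi.add_apply, and_true]
  split_ifs <;> first | (exfalso; omega) | norm_num

theorem xEven_mulVec_natSingle_sub_one (hn : 2 ≤ n) : xEven n *ᵥ e (n - 1) = e (n - 2) := by
  rw [mulVec_natSingle _ (by omega : n - 1 < 2 * n + 1)]
  funext k
  simp only [xEven, of_apply, natSingle]
  split_ifs <;> first | (exfalso; omega) | norm_num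

theorem xEven_mulVec_natSingle_two_mul_sub_one (hn : 2 ≤ n) :
    xEven n *ᵥ e (2 * n - 1) = e (n - 2) := by
  rw [mulVec_natSingle _ (by omega : 2 * n - 1 < 2 * n + 1)]
  funext k
  simp only [xEven, of_apply, natSingle, and_true]
  split_ifs <;> first | (exfalso; omega) | norm_num

theorem xEven_mulVec_natSingle_of_lt {j : ℕ} (hj : 1 ≤ j) (hj' : j + 2 ≤ n) :
    xEven n *ᵥ e j = e (j - 1) := by
  rw [mulVec_natSingle _ (by omega : j < 2 * n + 1)]
  funext k
  simp only [xEven, of_apply, natSingle]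
  split_ifs <;> first | (exfalso; omega) | norm_num

theorem xEven_transpose_mulVec_natSingle_last (hn : 2 ≤ n) :
    (xEven n)ᵀ *ᵥ e (2 * n) = -e 0 := by
  rw [mulVec_natSingle _ (by omega : 2 * n < 2 * n + 1)]
  funext k
  simp only [transpose_apply, xEven, of_apply, natSingle, Pi.neg_apply, true_and]
  split_ifs <;> first | (exfalso; omega) | norm_num

theorem xEven_transpose_mulVec_natSingle_of_lt {i : ℕ} (hi : i + 3 ≤ n) :
    (xEven n)ᵀ *ᵥ e i = e (i + 1) := by
  rw [mulVec_natSingle _ (by omega : i < 2 * n + 1)]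
  funext k
  simp only [transpose_apply, xEven, of_apply, natSingle]
  split_ifs <;> first | (exfalso; omega) | norm_num

theorem xEven_transpose_mulVec_natSingle_sub_two (hn : 2 ≤ n) :
    (xEven n)ᵀ *ᵥ e (n - 2) = e (n - 1) + e (2 * n - 1) := by
  rw [mulVec_natSingle _ (by omega : n - 2 < 2 * n + 1)]
  funext k
  simp only [transpose_apply, xEven, of_apply, natSingle, Pi.add_apply, true_and]
  split_ifs <;> first | (exfalso; omega) | norm_num

theorem xEven_transpose_mulVec_natSingle_sub_one (hn : 2 ≤ n) :
    (xEven n)ᵀ *ᵥ e (n - 1) = -e (2 * n - 2) := by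
  rw [mulVec_natSingle _ (by omega : n - 1 < 2 * n + 1)]
  funext k
  simp only [transpose_apply, xEven, of_apply, natSingle, Pi.neg_apply, true_and]
  split_ifs <;> first | (exfalso; omega) | norm_num

theorem xEven_transpose_mulVec_natSingle_two_mul_sub_one (hn : 2 ≤ n) :
    (xEven n)ᵀ *ᵥ e (2 * n - 1) = -e (2 * n - 2) := by
  rw [mulVec_natSingle _ (by omega : 2 * n - 1 < 2 * n + 1)]
  funext k
  simp only [transpose_apply, xEven, of_apply, natSingle, Pi.neg_apply]
  split_ifs <;> first | (exfalso; omega) | norm_num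

theorem xEven_transpose_mulVec_natSingle_of_le {i : ℕ} (hi : n + 1 ≤ i)
    (hi' : i + 2 ≤ 2 * n) : (xEven n)ᵀ *ᵥ e i = -e (i - 1) := by
  rw [mulVec_natSingle _ (by omega : i < 2 * n + 1)]
  funext k
  simp only [transpose_apply, xEven, of_apply, natSingle, Pi.neg_apply]
  split_ifs <;> first | (exfalso; omega) | norm_num

theorem natSingle_mem_ker_of_mul_xEven_comm (hn : 2 ≤ n)
    {M : Matrix (Fin (2 * n + 1)) (Fin (2 * n + 1)) ℂ} (h : M * xEven n = xEven n * M)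
    (hlast : e (2 * n) ∈ LinearMap.ker M.mulVecLin) :
    (∀ j, j ≠ n - 1 → j ≠ 2 * n - 1 → e j ∈ LinearMap.ker M.mulVecLin) ∧
      e (n - 1) + e (2 * n - 1) ∈ LinearMap.ker M.mulVecLin := by
  set K := LinearMap.ker M.mulVecLin
  have hx {w} (hw : w ∈ K) : xEven n *ᵥ w ∈ K := mulVec_mem_ker_of_mul_comm h hw
  have hup (m : ℕ) (hm : m ≤ n - 2) : e (n + m) ∈ K := by
    induction m with
    | zero => simpa [xEven_mulVec_natSingle_last hn] using hx hlast
    | succ m ih =>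
      have := hx (ih (by omega))
      rwa [xEven_mulVec_natSingle_of_le (by omega) (by omega), neg_mem_iff] at this
  have hpair : e (n - 1) + e (2 * n - 1) ∈ K := by
    have := hx (hup (n - 2) le_rfl)
    rwa [show n + (n - 2) = 2 * n - 2 by omega, xEven_mulVec_natSingle_two_mul_sub_two hn,
      neg_mem_iff] at this
  have hdown (m : ℕ) (hm : m ≤ n - 2) : e (n - 2 - m) ∈ K := by
    induction m with
    | zero =>
      have := hx hpair
      rwa [mulVec_add, xEven_mulVec_natSingle_sub_one hn,
        xEven_mulVec_natSingle_two_mul_sub_one hn, ← two_smul ℂ,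
        Submodule.smul_mem_iff _ two_ne_zero] at this
    | succ m ih =>
      have := hx (ih (by omega))
      rwa [xEven_mulVec_natSingle_of_lt (by omega) (by omega),
        show n - 2 - m - 1 = n - 2 - (m + 1) by omega] at this
  refine ⟨fun j hj₁ hj₂ => ?_, hpair⟩
  obtain hj | rfl | hj | hj : 2 * n + 1 ≤ j ∨ j = 2 * n ∨ n ≤ j ∧ j ≤ 2 * n - 2 ∨ j ≤ n - 2 := by
    omega
  · exact natSingle_mem_ker_of_le M hj
  · exact hlast
  · simpa [show n + (j - n) = j by omega] using hup (j - n) (by omega)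
  · simpa [show n - 2 - (n - 2 - j) = j by omega] using hdown (n - 2 - j) (Nat.sub_le _ _)

theorem natSingle_mem_ker_of_mul_xEven_transpose_comm (hn : 2 ≤ n)
    {M : Matrix (Fin (2 * n + 1)) (Fin (2 * n + 1)) ℂ} (h : M * (xEven n)ᵀ = (xEven n)ᵀ * M)
    (hlast : e (2 * n) ∈ LinearMap.ker M.mulVecLin) :
    (∀ j, j ≠ n - 1 → j ≠ 2 * n - 1 → e j ∈ LinearMap.ker M.mulVecLin) ∧
      e (n - 1) + e (2 * n - 1) ∈ LinearMap.ker M.mulVecLin := by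
  set K := LinearMap.ker M.mulVecLin
  have hx {w} (hw : w ∈ K) : (xEven n)ᵀ *ᵥ w ∈ K := mulVec_mem_ker_of_mul_comm h hw
  have hup (m : ℕ) (hm : m ≤ n - 2) : e m ∈ K := by
    induction m with
    | zero =>
      have := hx hlast
      rwa [xEven_transpose_mulVec_natSingle_last hn, neg_mem_iff] at this
    | succ m ih =>
      have := hx (ih (by omega))
      rwa [xEven_transpose_mulVec_natSingle_of_lt (by omega)] at this
  have hpair : e (n - 1) + e (2 * n - 1) ∈ K := by
    have := hx (hup (n - 2) le_rfl)
    rwa [xEven_transpose_mulVec_natSingle_sub_two hn] at this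
  have hdown (m : ℕ) (hm : m ≤ n - 2) : e (2 * n - 2 - m) ∈ K := by
    induction m with
    | zero =>
      have := hx hpair
      rwa [mulVec_add, xEven_transpose_mulVec_natSingle_sub_one hn,
        xEven_transpose_mulVec_natSingle_two_mul_sub_one hn, ← neg_add, neg_mem_iff,
        ← two_smul ℂ, Submodule.smul_mem_iff _ two_ne_zero] at this
    | succ m ih =>
      have := hx (ih (by omega))
      rwa [xEven_transpose_mulVec_natSingle_of_le (by omega) (by omega), neg_mem_iff,
        show 2 * n - 2 - m - 1 = 2 * n - 2 - (m + 1) by omega] at this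
  refine ⟨fun j hj₁ hj₂ => ?_, hpair⟩
  obtain hj | rfl | hj | hj : 2 * n + 1 ≤ j ∨ j = 2 * n ∨ n ≤ j ∧ j ≤ 2 * n - 2 ∨ j ≤ n - 2 := by
    omega
  · exact natSingle_mem_ker_of_le M hj
  · exact hlast
  · simpa [show 2 * n - 2 - (2 * n - 2 - j) = j by omega] using
      hdown (2 * n - 2 - j) (by omega)
  · exact hup j hj

end XEven

section Kmat

variable {n : ℕ} {A B C : Matrix (Fin n) (Fin n) ℂ}

theorem kmat_apply_last (i : Fin (2 * n + 1)) : kmat n A B C i (Fin.last (2 * n)) = 0 := by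
  simp only [kmat, of_apply, Fin.val_last]
  split_ifs <;> first | rfl | (exfalso; omega)

theorem kmat_last_apply (j : Fin (2 * n + 1)) : kmat n A B C (Fin.last (2 * n)) j = 0 := by
  simp only [kmat, of_apply, Fin.val_last]
  split_ifs <;> first | rfl | (exfalso; omega)

theorem kmat_apply_sub_one_two_mul_sub_one (hn : 1 ≤ n) (hB : Bᵀ = -B) :
    kmat n A B C ⟨n - 1, by omega⟩ ⟨2 * n - 1, by omega⟩ = 0 := by
  have hdiag : B ⟨n - 1, by omega⟩ ⟨n - 1, by omega⟩ = 0 :=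
    self_eq_neg.mp (congrFun₂ hB _ _)
  simpa [kmat, show n - 1 < n by omega, show ¬2 * n - 1 < n by omega, show 0 < n by omega,
    show 2 * n - 1 - n = n - 1 by omega] using hdiag

end Kmat

theorem statement15_general (n : ℕ) (hn : 2 ≤ n)
    (A B C : Matrix (Fin n) (Fin n) ℂ) (hB : Bᵀ = -B)
    (hcomm : kmat n A B C * xEven n = xEven n * kmat n A B C) :
    kmat n A B C = 0 := by
  have htcomm : (kmat n A B C)ᵀ * (xEven n)ᵀ = (xEven n)ᵀ * (kmat n A B C)ᵀ := by
    rw [← transpose_mul, ← transpose_mul, hcomm]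
  obtain ⟨hcol, hcolpair⟩ := natSingle_mem_ker_of_mul_xEven_comm hn hcomm
    ((natSingle_mem_ker_iff _ _).2 kmat_apply_last)
  obtain ⟨hrow, hrowpair⟩ := natSingle_mem_ker_of_mul_xEven_transpose_comm hn htcomm
    ((natSingle_mem_ker_iff _ _).2 kmat_last_apply)
  exact eq_zero_of_natSingle_mem_ker (by omega) (by omega) hcol hcolpair hrow hrowpair
    (kmat_apply_sub_one_two_mul_sub_one (by omega) hB)

/-- If `X = [[A, B, 0], [C, -Aᵗ, 0], [0, 0, 0]]` with `Bᵗ = -B`,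
`Cᵗ = -C` commutes with the element `x` of `so(2n+1, ℂ)` above, then `X = 0`: the
centralizer of `x` in the subalgebra `k` is zero. -/
theorem statement15 (n : ℕ) (hn : 2 ≤ n)
    (A B C : Matrix (Fin n) (Fin n) ℂ) (hB : Bᵀ = -B) (hC : Cᵀ = -C)
    (hcomm : kmat n A B C * xEven n = xEven n * kmat n A B C) :
    kmat n A B C = 0 :=
  statement15_general n hn A B C hB hcomm

end
end
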